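/- Properties of the dichotomy loss: define l : ℝ → ℝ by l(t) = −(4t+1)·exp(−2) for t ≤ −1/2, l(t) = exp(1/t) for −1/2 ≤ t < 0, and l(t) = 0 for t ≥ 0. Then (i) l is differentiable on all of ℝ; (ii) t·l'(t) ≥ 0 for every t ∈ ℝ, so inf_{t∈ℝ} t·l'(t) = 0 and the infimum is attained (e.g., at any t > 0); and (iii) sup_{t∈ℝ} t·l'(t) = +∞. -/

import Mathlib

/-- The dichotomy loss: a smoothed version of the perceptron loss `max{−t, 0}`. -/
noncomputable def dich (t : ℝ) : ℝ :=
  if t ≤ -(1/2 : ℝ) then -(4 * t + 1) * Real.exp (-2)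
  else if t < 0 then Real.exp (1 / t)
  else 0

/-!
On `[-1/2, ∞)` the loss is `s ↦ expNegInvGlue (-s)`, i.e. `exp (1/t)` for `t < 0` and `0` for
`t ≥ 0`, which is smooth; on `(-∞, -1/2]` it is the tangent line of that function at `-1/2`, so
the two pieces glue differentiably. Since `dich` is nonincreasing, `t · dich' t ≥ 0` for `t ≤ 0`,
and `dich' = 0` on `[0, ∞)`; on the linear piece `t · dich' t = -4 e⁻² t → ∞` as `t → -∞`.
-/

open Set Filter

theorem hasDerivAt_of_eqOn_Iic_of_eqOn_Ici {f g h : ℝ → ℝ} {a d : ℝ}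
    (hg : HasDerivAt g d a) (hh : HasDerivAt h d a)
    (hfg : EqOn f g (Iic a)) (hfh : EqOn f h (Ici a)) : HasDerivAt f d a := by
  have hL : HasDerivWithinAt f d (Iic a) a :=
    hg.hasDerivWithinAt.congr hfg (hfg self_mem_Iic)
  have hR : HasDerivWithinAt f d (Ici a) a :=
    hh.hasDerivWithinAt.congr hfh (hfh self_mem_Ici)
  simpa only [Iic_union_Ici, hasDerivWithinAt_univ] using hL.union hR

theorem hasDerivAt_expNegInvGlue_neg (x : ℝ) :
    HasDerivAt (fun s => expNegInvGlue (-s)) (-(x⁻¹ ^ 2 * expNegInvGlue (-x))) x := by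
  have hE : HasDerivAt expNegInvGlue ((-x)⁻¹ ^ 2 * expNegInvGlue (-x)) (-x) := by
    simpa using expNegInvGlue.hasDerivAt_polynomial_eval_inv_mul 1 (-x)
  refine (hE.comp x (hasDerivAt_neg x)).congr_deriv ?_
  rw [inv_neg, neg_sq]
  ring

theorem dich_of_le {t : ℝ} (ht : t ≤ -(1/2 : ℝ)) : dich t = -(4 * t + 1) * Real.exp (-2) :=
  if_pos ht

theorem dich_eq_expNegInvGlue_neg {t : ℝ} (ht : -(1/2 : ℝ) ≤ t) :
    dich t = expNegInvGlue (-t) := by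
  rcases ht.eq_or_lt with rfl | ht
  · norm_num [dich, expNegInvGlue]
  rw [dich, if_neg (not_le.mpr ht)]
  split_ifs with h0
  · rw [expNegInvGlue, if_neg (by linarith), inv_neg, neg_neg, one_div]
  · rw [expNegInvGlue.zero_of_nonpos (by linarith)]

noncomputable def dichDeriv (t : ℝ) : ℝ :=
  if t ≤ -(1/2 : ℝ) then -4 * Real.exp (-2) else -(t⁻¹ ^ 2 * expNegInvGlue (-t))

theorem hasDerivAt_dich (t : ℝ) : HasDerivAt dich (dichDeriv t) t := by
  have hlin : ∀ x : ℝ,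
      HasDerivAt (fun s : ℝ => -(4 * s + 1) * Real.exp (-2)) (-4 * Real.exp (-2)) x := fun x => by
    simpa using ((((hasDerivAt_id x).const_mul 4).add_const 1).neg).mul_const (Real.exp (-2))
  rcases lt_trichotomy t (-(1/2 : ℝ)) with ht | rfl | ht
  · rw [dichDeriv, if_pos ht.le]
    exact (hlin t).congr_of_eventuallyEq <|
      (eventually_lt_nhds ht).mono fun s hs => dich_of_le hs.le
  · rw [dichDeriv, if_pos le_rfl]
    have hglue : -((-(1/2 : ℝ))⁻¹ ^ 2 * expNegInvGlue (-(-(1/2 : ℝ)))) = -4 * Real.exp (-2) := by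
      norm_num [expNegInvGlue]
    exact hasDerivAt_of_eqOn_Iic_of_eqOn_Ici (hlin _)
      (hglue ▸ hasDerivAt_expNegInvGlue_neg _)
      (fun s hs => dich_of_le hs) (fun s hs => dich_eq_expNegInvGlue_neg hs)
  · rw [dichDeriv, if_neg (not_le.mpr ht)]
    exact (hasDerivAt_expNegInvGlue_neg t).congr_of_eventuallyEq <|
      (eventually_gt_nhds ht).mono fun s hs => dich_eq_expNegInvGlue_neg hs.le

theorem dichDeriv_of_nonneg {t : ℝ} (ht : 0 ≤ t) : dichDeriv t = 0 := by
  rw [dichDeriv, if_neg (by linarith), expNegInvGlue.zero_of_nonpos (by linarith), mul_zero,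
    neg_zero]

theorem mul_dichDeriv_nonneg (t : ℝ) : 0 ≤ t * dichDeriv t := by
  rcases le_or_gt 0 t with h0 | h0
  · rw [dichDeriv_of_nonneg h0, mul_zero]
  · have hderiv : dichDeriv t ≤ 0 := by
      unfold dichDeriv
      split_ifs
      · nlinarith [Real.exp_pos (-2)]
      · exact neg_nonpos.mpr (mul_nonneg (sq_nonneg _) (expNegInvGlue.nonneg _))
    exact mul_nonneg_of_nonpos_of_nonpos h0.le hderiv

theorem tendsto_mul_dichDeriv_atBot : Tendsto (fun t => t * dichDeriv t) atBot atTop := by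
  have hslope : -4 * Real.exp (-2) < 0 := by nlinarith [Real.exp_pos (-2)]
  refine (tendsto_id.atBot_mul_const_of_neg hslope).congr' ?_
  filter_upwards [eventually_le_atBot (-(1/2 : ℝ))] with t ht
  rw [dichDeriv, if_pos ht, id]

/-- properties of the dichotomy loss: (i) it is differentiable on ℝ;
(ii) `t·l'(t) ≥ 0` everywhere and the infimum 0 is attained at any `t > 0`;
(iii) `sup_t t·l'(t) = +∞` (the map is unbounded above). -/
theorem stmt15 :
    Differentiable ℝ dich ∧
    (∀ t : ℝ, 0 ≤ t * deriv dich t) ∧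
    (∀ t : ℝ, 0 < t → t * deriv dich t = 0) ∧
    ¬ BddAbove (Set.range fun t => t * deriv dich t) := by
  have hderiv : deriv dich = dichDeriv := funext fun t => (hasDerivAt_dich t).deriv
  refine ⟨fun t => (hasDerivAt_dich t).differentiableAt, ?_, ?_, ?_⟩ <;> rw [hderiv]
  · exact mul_dichDeriv_nonneg
  · intro t ht
    rw [dichDeriv_of_nonneg ht.le, mul_zero]
  · exact not_bddAbove_of_tendsto_atTop tendsto_mul_dichDeriv_atBot
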